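/- arXiv:2411.15069 — 6 statements merged into one kernel-verified Lean document; each statement's English description precedes it below -/
import Mathlib

section
/- Let $L, c \in \mathbb{R}$, $g \in \mathbb{C}$, and set $r(t) := e^{itL} g$. Let $w, N : \mathbb{R} \to \mathbb{C}$ with $N$ continuous and $w$ differentiable, and define $P(t) := \mathrm{Re}(\overline{r(t)} \, w(t)) + \tfrac{1}{2}|w(t)|^2$. Assume that for every $t \in \mathbb{R}$, $w'(t) = iL\,w(t) + 2ic\,(r(t)+w(t))\,P(t) + N(t)$. Then for every $t \in \mathbb{R}$, $P(t) = \int_0^t \mathrm{Re}\big(\overline{r(y)+w(y)}\, N(y)\big)\,dy + \mathrm{Re}(\overline{g}\, w(0)) + \tfrac{1}{2}|w(0)|^2$. -/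
/-!
Write `P = ⟪r, w⟫_ℝ + ½‖w‖²`, so that `P' = ⟪r', w⟫_ℝ + ⟪r + w, w'⟫_ℝ`. Multiplication by `iL`
is skew-adjoint for the real inner product, so the contributions of `r' = iL r` and of the
`iL w` term of `w'` cancel; the resonant term `2ic (r + w) P` is a real multiple of `i (r + w)`,
hence orthogonal to `r + w`. Only `⟪r + w, N⟫_ℝ` survives, and the fundamental theorem of
calculus gives the formula.
-/

open Complex intervalIntegral
open scoped InnerProductSpace

section

variable {E : Type*} [NormedAddCommGroup E] [InnerProductSpace ℂ E]

attribute [local instance] InnerProductSpace.complexToReal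

lemma real_inner_I_mul_smul_self (a : ℝ) (x : E) : ⟪x, (I * a) • x⟫_ℝ = 0 := by
  simp [real_inner_eq_re_inner ℂ, inner_smul_right, ← ofReal_pow]

lemma real_inner_I_mul_smul_left_add_right (a : ℝ) (x y : E) :
    ⟪(I * a) • x, y⟫_ℝ + ⟪x, (I * a) • y⟫_ℝ = 0 := by
  simp [real_inner_eq_re_inner ℂ, inner_smul_right, inner_smul_left]

theorem hasDerivAt_real_inner_add_half_norm_sq {r w : ℝ → E} {n : E} {L α t : ℝ}
    (hr : HasDerivAt r ((I * L) • r t) t)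
    (hw : HasDerivAt w ((I * L) • w t + (I * α) • (r t + w t) + n) t) :
    HasDerivAt (fun s => ⟪r s, w s⟫_ℝ + 1 / 2 * ‖w s‖ ^ 2) ⟪r t + w t, n⟫_ℝ t := by
  refine ((hr.inner ℝ hw).add (hw.norm_sq.const_mul (1 / 2))).congr_deriv ?_
  have hskew := real_inner_I_mul_smul_left_add_right L (r t) (w t)
  have hrot := real_inner_I_mul_smul_self L (w t)
  have hres := real_inner_I_mul_smul_self α (r t + w t)
  simp only [inner_add_left, inner_add_right] at hres ⊢
  linarith

end

theorem hasDerivAt_cexp_I_mul_mul (L : ℝ) (g : ℂ) (t : ℝ) :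
    HasDerivAt (fun s : ℝ => exp (I * s * L) * g) (I * L * (exp (I * t * L) * g)) t := by
  have hlin : HasDerivAt (fun s : ℝ => I * s * L) (I * L) t := by
    simpa using ((hasDerivAt_id (t : ℂ)).comp_ofReal.const_mul I).mul_const (L : ℂ)
  exact (hlin.cexp.mul_const g).congr_deriv (by ring)

theorem stmt_0 (L c : ℝ) (g : ℂ) (r : ℝ → ℂ)
    (hr : ∀ t : ℝ, r t = Complex.exp (Complex.I * t * L) * g)
    (w N : ℝ → ℂ) (hN : Continuous N) (hw : Differentiable ℝ w)
    (P : ℝ → ℝ)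
    (hP : ∀ t : ℝ, P t = ((starRingEnd ℂ) (r t) * w t).re + (1/2) * ‖w t‖ ^ 2)
    (hode : ∀ t : ℝ, deriv w t
      = Complex.I * (L : ℂ) * w t + 2 * Complex.I * (c : ℂ) * (r t + w t) * (P t : ℂ) + N t) :
    ∀ t : ℝ, P t = (∫ y in (0:ℝ)..t, ((starRingEnd ℂ) (r y + w y) * N y).re)
      + ((starRingEnd ℂ) g * w 0).re + (1/2) * ‖w 0‖ ^ 2 := by
  have hr' (s : ℝ) : HasDerivAt r ((I * L) • r s) s := by
    rw [funext hr]
    exact hasDerivAt_cexp_I_mul_mul L g s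
  have hP_inner : P = fun s => ⟪r s, w s⟫_ℝ + 1 / 2 * ‖w s‖ ^ 2 := by
    funext s
    rw [hP, Complex.inner, mul_comm]
  have hP' (s : ℝ) : HasDerivAt P ((starRingEnd ℂ) (r s + w s) * N s).re s := by
    have hw' : HasDerivAt w ((I * L) • w s + (I * (2 * c * P s : ℝ)) • (r s + w s) + N s) s :=
      (hw s).hasDerivAt.congr_deriv (by rw [hode]; push_cast; ring)
    rw [hP_inner]
    convert hasDerivAt_real_inner_add_half_norm_sq (hr' s) hw' using 1
    rw [Complex.inner, mul_comm]
  intro t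
  have hrc : Continuous r := continuous_iff_continuousAt.2 fun s => (hr' s).continuousAt
  have hwc : Continuous w := hw.continuous
  have hint : IntervalIntegrable (fun y => ((starRingEnd ℂ) (r y + w y) * N y).re)
      MeasureTheory.volume 0 t :=
    Continuous.intervalIntegrable (by fun_prop) 0 t
  have hr0 : r 0 = g := by simp [hr]
  rw [integral_eq_sub_of_hasDerivAt (fun s _ => hP' s) hint, hP 0, hr0]
  ring
end

section
/- Let $s \in \mathbb{R}$, let $n$ be a nonzero integer, and let $a : \mathbb{Z} \to \mathbb{C}$ be finitely supported with $a_0 = 0$ and $a_{-m} = \overline{a_m}$ for all $m \in \mathbb{Z}$. Then $\sum \frac{\langle n_1\rangle^s \langle n_2\rangle^s \langle n_3\rangle^s}{i\, n_3\, \langle n\rangle^s}\, a_{n_1} a_{n_2} a_{n_3} \;=\; i\, \frac{\langle n\rangle^{2s}}{n}\, |a_n|^2\, a_n$, where the sum ranges over all triples $(n_1, n_2, n_3) \in \mathbb{Z}^3$ satisfying $n_1 + n_2 + n_3 = n$, $n_1 \neq 0$, $n_2 \neq 0$, $n_3 \neq 0$, $n_1 + n_2 \neq 0$, and $(n_2 +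 n_3)(n_3 + n_1) = 0$. -/
open Complex

/-! On the resonant set, `n₁ + n₂ ≠ 0` forces `n₂ + n₃ = 0` or `n₃ + n₁ = 0`, so the triples are
`(n, m, -m)` or `(m, n, -m)` with `m ∉ {0, -n}`, and the two branches meet only in `(n, n, -n)`.
The summand is symmetric in `n₁, n₂` and, because of the factor `1 / n₃`, odd in `m` on each
branch; an odd function summed over `ℤ \ {0, -n}` gives its value at `n`. By inclusion–exclusion
only the term at `(n, n, -n)` survives, and there `a₋ₙ = conj aₙ` turns `aₙ aₙ a₋ₙ` into
`|aₙ|² aₙ`. -/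

noncomputable def japaneseBracket (m : ℤ) : ℝ := √(1 + (m : ℝ) ^ 2)

lemma japaneseBracket_neg (m : ℤ) : japaneseBracket (-m) = japaneseBracket m := by
  simp [japaneseBracket]

lemma japaneseBracket_pos (m : ℤ) : 0 < japaneseBracket m :=
  Real.sqrt_pos.2 (by positivity)

section OddFinsum

variable {α M : Type*} [AddCommGroup M] [IsAddTorsionFree M] {f : α → M}

lemma finsum_eq_zero_of_odd [InvolutiveNeg α] (hf : ∀ x, f (-x) = -f x) : ∑ᶠ x, f x = 0 := by
  have h := finsum_comp_equiv (Equiv.neg α) (f := f)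
  simp only [Equiv.neg_apply, hf, finsum_neg_distrib] at h
  exact neg_eq_self.1 h

lemma finsum_mem_compl_pair_of_odd [AddGroup α] (hfin : (Function.support f).Finite)
    (hf : ∀ x, f (-x) = -f x) (x : α) : ∑ᶠ m ∈ ({0, -x} : Set α)ᶜ, f m = f x := by
  have hf0 : f 0 = 0 := neg_eq_self.1 (by simpa using (hf 0).symm)
  have hsplit := finsum_mem_add_sdiff' (f := f) (Set.subset_univ {0, -x})
    (hfin.inter_of_right _)
  rw [finsum_mem_univ, finsum_eq_zero_of_odd hf, ← Set.compl_eq_univ_sdiff] at hsplit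
  have hpair : ∑ᶠ m ∈ ({0, -x} : Set α), f m = -f x := by
    by_cases hx : x = 0
    · simp [hx, hf0]
    · rw [finsum_mem_pair (by simpa [eq_comm] using hx), hf0, hf, zero_add]
  rw [hpair] at hsplit
  exact (neg_add_eq_zero.1 hsplit).symm

end OddFinsum

def resonantSet (n : ℤ) : Set (ℤ × ℤ × ℤ) :=
  {p | p.1 + p.2.1 + p.2.2 = n ∧ p.1 ≠ 0 ∧ p.2.1 ≠ 0 ∧ p.2.2 ≠ 0 ∧
    p.1 + p.2.1 ≠ 0 ∧ (p.2.1 + p.2.2) * (p.2.2 + p.1) = 0}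

section ResonantSet

variable {n : ℤ}

lemma resonantSet_eq_union (hn : n ≠ 0) :
    resonantSet n = (fun m ↦ (n, m, -m)) '' ({0, -n} : Set ℤ)ᶜ ∪
      (fun m ↦ (m, n, -m)) '' ({0, -n} : Set ℤ)ᶜ := by
  ext ⟨x, y, z⟩
  simp only [resonantSet, Set.mem_ofPred_eq, Set.mem_union, Set.mem_image, Set.mem_compl_iff,
    Set.mem_insert_iff, Set.mem_singleton_iff, not_or, Prod.mk.injEq]
  constructor
  · rintro ⟨hsum, hx, hy, -, hxy, hres⟩
    rcases mul_eq_zero.1 hres with h | h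
    · exact Or.inl ⟨y, ⟨hy, by omega⟩, by omega, rfl, by omega⟩
    · exact Or.inr ⟨x, ⟨hx, by omega⟩, rfl, by omega, by omega⟩
  · rintro (⟨m, ⟨hm, hmn⟩, rfl, rfl, rfl⟩ | ⟨m, ⟨hm, hmn⟩, rfl, rfl, rfl⟩)
    · exact ⟨by ring, hn, hm, by omega, by omega, by ring⟩
    · exact ⟨by ring, hm, hn, by omega, by omega, by ring⟩

lemma resonantSet_branches_inter (hn : n ≠ 0) :
    (fun m ↦ (n, m, -m)) '' ({0, -n} : Set ℤ)ᶜ ∩ (fun m ↦ (m, n, -m)) '' ({0, -n} : Set ℤ)ᶜ =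
      {(n, n, -n)} := by
  ext ⟨x, y, z⟩
  simp only [Set.mem_inter_iff, Set.mem_image, Set.mem_compl_iff, Set.mem_insert_iff,
    Set.mem_singleton_iff, not_or, Prod.mk.injEq]
  constructor
  · rintro ⟨⟨m, -, rfl, rfl, rfl⟩, ⟨k, -, rfl, h, -⟩⟩
    exact ⟨rfl, h.symm, by rw [h]⟩
  · rintro ⟨hx, hy, hz⟩
    exact ⟨⟨y, by omega, by omega, rfl, by omega⟩, ⟨x, by omega, rfl, by omega, by omega⟩⟩

lemma finsum_mem_resonantSet {M : Type*} [AddCommGroup M] [IsAddTorsionFree M]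
    {F : ℤ × ℤ × ℤ → M} (hn : n ≠ 0) (hfin : (Function.support F).Finite)
    (hswap : ∀ x y z, F (x, y, z) = F (y, x, z)) (hodd : ∀ m, F (n, -m, m) = -F (n, m, -m)) :
    ∑ᶠ p ∈ resonantSet n, F p = F (n, n, -n) := by
  have hinjA : Function.Injective fun m : ℤ ↦ (n, m, -m) := fun _ _ h ↦ congrArg (fun p ↦ p.2.1) h
  have hinjB : Function.Injective fun m : ℤ ↦ (m, n, -m) := fun _ _ h ↦ congrArg Prod.fst h
  have hbranch : ∑ᶠ m ∈ ({0, -n} : Set ℤ)ᶜ, F (n, m, -m) = F (n, n, -n) :=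
    finsum_mem_compl_pair_of_odd (f := fun m ↦ F (n, m, -m))
      (hfin.preimage hinjA.injOn) (fun m ↦ by simpa using hodd m) n
  have key := finsum_mem_union_inter' (f := F) (hfin.inter_of_right
    ((fun m ↦ (n, m, -m)) '' ({0, -n} : Set ℤ)ᶜ)) (hfin.inter_of_right
    ((fun m ↦ (m, n, -m)) '' ({0, -n} : Set ℤ)ᶜ))
  rw [← resonantSet_eq_union hn, resonantSet_branches_inter hn, finsum_mem_singleton,
    finsum_mem_image hinjA.injOn, finsum_mem_image hinjB.injOn] at key
  simp only [hswap _ n, hbranch] at key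
  exact add_right_cancel key

end ResonantSet

noncomputable def resonantSummand (s : ℝ) (n : ℤ) (a : ℤ → ℂ) (p : ℤ × ℤ × ℤ) : ℂ :=
  ((japaneseBracket p.1 ^ s * japaneseBracket p.2.1 ^ s * japaneseBracket p.2.2 ^ s : ℝ) : ℂ)
    / (I * (p.2.2 : ℂ) * ((japaneseBracket n ^ s : ℝ) : ℂ)) * a p.1 * a p.2.1 * a p.2.2

section ResonantSummand

variable (s : ℝ) (n : ℤ) {a : ℤ → ℂ}

lemma finite_support_resonantSummand (ha : (Function.support a).Finite) :
    (Function.support (resonantSummand s n a)).Finite := by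
  refine (ha.prod (ha.prod ha)).subset fun p hp ↦ ?_
  simp only [Set.mem_prod, Function.mem_support]
  refine ⟨?_, ?_, ?_⟩ <;> intro h0 <;> apply hp <;> simp [resonantSummand, h0]

lemma resonantSummand_swap (x y z : ℤ) :
    resonantSummand s n a (x, y, z) = resonantSummand s n a (y, x, z) := by
  simp only [resonantSummand]
  push_cast
  ring

lemma resonantSummand_neg (k m : ℤ) :
    resonantSummand s n a (k, -m, m) = -resonantSummand s n a (k, m, -m) := by
  simp only [resonantSummand, japaneseBracket_neg, Int.cast_neg, mul_neg, neg_mul, div_neg]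
  ring

lemma resonantSummand_diag (hn : n ≠ 0) (hreal : ∀ m : ℤ, a (-m) = (starRingEnd ℂ) (a m)) :
    resonantSummand s n a (n, n, -n) =
      I * ((japaneseBracket n ^ (2 * s) / (n : ℝ) : ℝ) : ℂ) * (‖a n‖ ^ 2 : ℝ) * a n := by
  have hpos := japaneseBracket_pos n
  have hne : ((japaneseBracket n ^ s : ℝ) : ℂ) ≠ 0 := by
    exact_mod_cast (Real.rpow_pos_of_pos hpos s).ne'
  have hnc : (n : ℂ) ≠ 0 := by exact_mod_cast hn
  simp only [resonantSummand, japaneseBracket_neg, hreal, two_mul, Real.rpow_add hpos]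
  push_cast
  field_simp
  linear_combination (-(‖a n‖ : ℂ) ^ 2 * a n) * I_sq - a n * Complex.mul_conj' (a n)

end ResonantSummand

theorem stmt_5_general (s : ℝ) (n : ℤ) (hn : n ≠ 0) (a : ℤ → ℂ)
    (ha : (Function.support a).Finite)
    (hreal : ∀ m : ℤ, a (-m) = (starRingEnd ℂ) (a m)) :
    (∑ᶠ (p : ℤ × ℤ × ℤ)
      (_ : p.1 + p.2.1 + p.2.2 = n ∧ p.1 ≠ 0 ∧ p.2.1 ≠ 0 ∧ p.2.2 ≠ 0 ∧
           p.1 + p.2.1 ≠ 0 ∧ (p.2.1 + p.2.2) * (p.2.2 + p.1) = 0),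
        ((Real.sqrt (1 + (p.1 : ℝ)^2) ^ s * Real.sqrt (1 + (p.2.1 : ℝ)^2) ^ s *
          Real.sqrt (1 + (p.2.2 : ℝ)^2) ^ s : ℝ) : ℂ)
          / (Complex.I * (p.2.2 : ℂ) * ((Real.sqrt (1 + (n : ℝ)^2) ^ s : ℝ) : ℂ))
          * a p.1 * a p.2.1 * a p.2.2)
      = Complex.I * ((Real.sqrt (1 + (n : ℝ)^2) ^ (2 * s) / (n : ℝ) : ℝ) : ℂ)
          * (‖a n‖ ^ 2 : ℝ) * a n :=
  (finsum_mem_resonantSet hn (finite_support_resonantSummand s n ha) (resonantSummand_swap s n)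
    (resonantSummand_neg s n n)).trans (resonantSummand_diag s n hn hreal)

theorem stmt_5 (s : ℝ) (n : ℤ) (hn : n ≠ 0) (a : ℤ → ℂ)
    (ha : (Function.support a).Finite) (ha0 : a 0 = 0)
    (hreal : ∀ m : ℤ, a (-m) = (starRingEnd ℂ) (a m)) :
    (∑ᶠ (p : ℤ × ℤ × ℤ)
      (_ : p.1 + p.2.1 + p.2.2 = n ∧ p.1 ≠ 0 ∧ p.2.1 ≠ 0 ∧ p.2.2 ≠ 0 ∧
           p.1 + p.2.1 ≠ 0 ∧ (p.2.1 + p.2.2) * (p.2.2 + p.1) = 0),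
        ((Real.sqrt (1 + (p.1 : ℝ)^2) ^ s * Real.sqrt (1 + (p.2.1 : ℝ)^2) ^ s *
          Real.sqrt (1 + (p.2.2 : ℝ)^2) ^ s : ℝ) : ℂ)
          / (Complex.I * (p.2.2 : ℂ) * ((Real.sqrt (1 + (n : ℝ)^2) ^ s : ℝ) : ℂ))
          * a p.1 * a p.2.1 * a p.2.2)
      = Complex.I * ((Real.sqrt (1 + (n : ℝ)^2) ^ (2 * s) / (n : ℝ) : ℝ) : ℂ)
          * (‖a n‖ ^ 2 : ℝ) * a n :=
  stmt_5_general s n hn a ha hreal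
end

section
/- Let $n_1, n_2, n_3$ be integers with $n_3 \neq 0$, $n_1 + n_2 \neq 0$, $|n_1 + n_2| \leq \tfrac{1}{8}|n_1|$, and $|n_3| \leq \tfrac{1}{8}|n_1|$, and set $n := n_1 + n_2 + n_3$. Then $|n\,(n_1 + n_2)\, n_3| \;<\; |(n_1 + n_2)(n_2 + n_3)(n_3 + n_1)|$. -/
/-! With `s = n₁ + n₂` and `t = n₃` both at most `|n₁|/8`, the factor `n = s + t` is at most
`|n₁|/4`, while `n₂ + n₃ = n - n₁` and `n₃ + n₁` both stay above `3|n₁|/4`; so after cancelling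
the common factor `|n₁ + n₂|`, the left side is at most `|n₁|²/32` and the right side at least
`21|n₁|²/32`. -/

lemma abs_add_mul_lt_abs_sub_mul_add {R : Type*} [CommRing R] [LinearOrder R]
    [IsStrictOrderedRing R] {s t x : R} (ht : t ≠ 0) (hs : 8 * |s| ≤ |x|) (htx : 8 * |t| ≤ |x|) :
    |(s + t) * t| < |(s + t - x) * (t + x)| := by
  rw [abs_mul, abs_mul]
  have ht0 : 0 < |t| := abs_pos.mpr ht
  have hsum : |s + t| ≤ |s| + |t| := abs_add_le s t
  have hfirst : |x| - |s + t| ≤ |s + t - x| := by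
    simpa only [abs_sub_comm x] using abs_sub_abs_le_abs_sub x (s + t)
  have hsecond : |x| - |t| ≤ |t + x| := by
    simpa only [abs_neg, sub_neg_eq_add, add_comm x] using abs_sub_abs_le_abs_sub x (-t)
  have hx0 : 0 < |x| := by linarith
  have hsmall : 8 * (|s + t| + |t|) ≤ 3 * |x| := by linarith
  calc |s + t| * |t| < (|x| - |s + t|) * (|x| - |t|) := by
        nlinarith [mul_le_mul_of_nonneg_left hsmall hx0.le, mul_pos hx0 hx0]
    _ ≤ |s + t - x| * |t + x| :=
        mul_le_mul hfirst hsecond (by linarith) (abs_nonneg _)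

theorem stmt_10 (n₁ n₂ n₃ : ℤ) (h3 : n₃ ≠ 0) (h12 : n₁ + n₂ ≠ 0)
    (hsmall12 : 8 * |n₁ + n₂| ≤ |n₁|) (hsmall3 : 8 * |n₃| ≤ |n₁|)
    (n : ℤ) (hn : n = n₁ + n₂ + n₃) :
    |n * (n₁ + n₂) * n₃| < |(n₁ + n₂) * (n₂ + n₃) * (n₃ + n₁)| := by
  subst hn
  calc |(n₁ + n₂ + n₃) * (n₁ + n₂) * n₃| = |n₁ + n₂| * |(n₁ + n₂ + n₃) * n₃| := by
        rw [abs_mul, abs_mul, abs_mul]; ring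
    _ < |n₁ + n₂| * |(n₁ + n₂ + n₃ - n₁) * (n₃ + n₁)| :=
        mul_lt_mul_of_pos_left (abs_add_mul_lt_abs_sub_mul_add h3 hsmall12 hsmall3)
          (abs_pos.mpr h12)
    _ = |(n₁ + n₂) * (n₂ + n₃) * (n₃ + n₁)| := by
        rw [show n₁ + n₂ + n₃ - n₁ = n₂ + n₃ by ring, abs_mul, abs_mul, abs_mul]; ring
end

section
/- For every $s$ with $\tfrac{1}{2} \leq s < \tfrac{2}{3}$ and every $\varepsilon$ with $0 < \varepsilon < \tfrac{2}{3} - s$ there exists a constant $C > 0$ such that for all nonzero integers $n_1, n_2$ with $n := n_1 + n_2 \neq 0$: $\langle n\rangle^{1/3 - 2\varepsilon}\, \big(3\,|n|\,|n_1|\,|n_2|\big)^{1/3 + \varepsilon}\, \langle n_1\rangle^{s}\, \langle n_2\rangle^{s} \;\leq\; C\, \langle n\rangle^{s}\, |n_1|\, |n_2|$. -/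
noncomputable def jb (m : ℤ) : ℝ := Real.sqrt (1 + (m : ℝ) ^ 2)

/-!
With `a = |n₁|`, `b = |n₂|` and `A = ⟨n⟩`, we have `|n| ≤ A`, `⟨nᵢ⟩ ≤ 2|nᵢ|` and
`A ≤ 1 + a + b ≤ 3ab`. Hence the left side is at most a constant times
`A^(1/3 - 2ε + 1/3 + ε) (ab)^(1/3 + ε + s)`; splitting off `A^s` and bounding the remaining power
`A^(2/3 - ε - s)` (a nonnegative exponent exactly when `ε ≤ 2/3 - s`) by `(3ab)^(2/3 - ε - s)`
leaves `(ab)^1`.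
-/

open Real

lemma abs_le_jb (m : ℤ) : |(m : ℝ)| ≤ jb m := by
  rw [jb, ← sqrt_sq_eq_abs]
  exact sqrt_le_sqrt (by simp)

lemma jb_le_one_add_abs (m : ℤ) : jb m ≤ 1 + |(m : ℝ)| := by
  rw [jb, sqrt_le_left (by positivity)]
  nlinarith [abs_nonneg (m : ℝ), sq_abs (m : ℝ)]

lemma jb_pos (m : ℤ) : 0 < jb m := by
  unfold jb; positivity

lemma one_le_abs_intCast {m : ℤ} (hm : m ≠ 0) : (1 : ℝ) ≤ |(m : ℝ)| := by
  exact_mod_cast Int.one_le_abs hm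

lemma jb_le_two_mul_abs {m : ℤ} (hm : m ≠ 0) : jb m ≤ 2 * |(m : ℝ)| := by
  linarith [jb_le_one_add_abs m, one_le_abs_intCast hm]

lemma jb_add_le_three_mul_abs_mul_abs {m₁ m₂ : ℤ} (h₁ : m₁ ≠ 0) (h₂ : m₂ ≠ 0) :
    jb (m₁ + m₂) ≤ 3 * |(m₁ : ℝ)| * |(m₂ : ℝ)| := by
  have ha := one_le_abs_intCast h₁
  have hb := one_le_abs_intCast h₂
  calc jb (m₁ + m₂) ≤ 1 + |(m₁ : ℝ)| + |(m₂ : ℝ)| := by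
        grw [jb_le_one_add_abs, Int.cast_add, abs_add_le, add_assoc]
    _ ≤ 3 * |(m₁ : ℝ)| * |(m₂ : ℝ)| := by nlinarith

lemma rpow_mul_rpow_mul_rpow_mul_rpow_le {p q s A c a b A₁ A₂ : ℝ} (hs : 0 ≤ s) (hq : 0 ≤ q)
    (hsp : s ≤ p + q) (hpq : p + 2 * q = 1) (hA : 0 < A) (ha : 0 < a) (hb : 0 < b)
    (hc : 0 ≤ c) (hcA : c ≤ A) (hAab : A ≤ 3 * a * b) (hA₁ : 0 ≤ A₁) (hA₁a : A₁ ≤ 2 * a)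
    (hA₂ : 0 ≤ A₂) (hA₂b : A₂ ≤ 2 * b) :
    A ^ p * (3 * c * a * b) ^ q * A₁ ^ s * A₂ ^ s
      ≤ 3 ^ q * 4 ^ s * 3 ^ (p + q - s) * A ^ s * a * b := by
  have hab : 0 < a * b := mul_pos ha hb
  calc A ^ p * (3 * c * a * b) ^ q * A₁ ^ s * A₂ ^ s
      ≤ A ^ p * (3 * A * (a * b)) ^ q * ((2 * a) ^ s * (2 * b) ^ s) := by
        rw [mul_assoc _ a b, mul_assoc _ (A₁ ^ s)]; gcongr
    _ = 3 ^ q * 4 ^ s * (A ^ (p + q - s) * A ^ s) * (a * b) ^ (q + s) := by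
        rw [← mul_rpow (by positivity) (by positivity), ← rpow_add hA, sub_add_cancel,
          rpow_add hA, rpow_add hab, mul_rpow (by positivity) hab.le,
          mul_rpow (by norm_num) hA.le, show 2 * a * (2 * b) = 4 * (a * b) by ring,
          mul_rpow (by norm_num) hab.le]
        ring
    _ ≤ 3 ^ q * 4 ^ s * ((3 * (a * b)) ^ (p + q - s) * A ^ s) * (a * b) ^ (q + s) := by
        gcongr
        linarith
    _ = 3 ^ q * 4 ^ s * 3 ^ (p + q - s) * A ^ s * (a * b) ^ ((p + q - s) + (q + s)) := by
        rw [mul_rpow (by norm_num) hab.le, rpow_add hab (p + q - s) (q + s)]; ring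
    _ = 3 ^ q * 4 ^ s * 3 ^ (p + q - s) * A ^ s * a * b := by
        rw [show p + q - s + (q + s) = 1 by linarith, rpow_one]; ring

theorem stmt_12 :
    ∀ s : ℝ, 1/2 ≤ s → s < 2/3 → ∀ ε : ℝ, 0 < ε → ε < 2/3 - s →
      ∃ C : ℝ, 0 < C ∧ ∀ n₁ n₂ : ℤ, n₁ ≠ 0 → n₂ ≠ 0 → n₁ + n₂ ≠ 0 →
        jb (n₁ + n₂) ^ (1/3 - 2*ε)
            * (3 * |((n₁ + n₂ : ℤ) : ℝ)| * |(n₁ : ℝ)| * |(n₂ : ℝ)|) ^ (1/3 + ε)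
            * jb n₁ ^ s * jb n₂ ^ s
          ≤ C * jb (n₁ + n₂) ^ s * |(n₁ : ℝ)| * |(n₂ : ℝ)| := by
  intro s hs _ ε hε hεs
  refine ⟨3 ^ (1/3 + ε) * 4 ^ s * 3 ^ (1/3 - 2*ε + (1/3 + ε) - s), by positivity, ?_⟩
  intro n₁ n₂ h₁ h₂ _
  have ha := one_le_abs_intCast h₁
  have hb := one_le_abs_intCast h₂
  exact rpow_mul_rpow_mul_rpow_mul_rpow_le (by linarith) (by linarith) (by linarith) (by ring)
    (jb_pos _) (by linarith) (by linarith) (abs_nonneg _) (abs_le_jb _)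
    (jb_add_le_three_mul_abs_mul_abs h₁ h₂) (jb_pos _).le (jb_le_two_mul_abs h₁)
    (jb_pos _).le (jb_le_two_mul_abs h₂)
end

section
/- For every $s$ with $\tfrac{1}{2} \leq s < \tfrac{13}{18}$ there exists a constant $C > 0$ such that for all nonzero integers $n_1, n_2$ with $n := n_1 + n_2 \neq 0$: $\frac{\langle n\rangle^{s-1}\, |n|\, \langle n_1\rangle^{s}\, \langle n_2\rangle^{s}}{\langle n_{\max}\rangle^{5/3}\, \langle n_{\min}\rangle} \;\leq\; C\, \langle n_{\max}\rangle^{3s - 13/6}\, \langle n_{\min}\rangle^{-1/2}$, where $n_{\max} := \max(|n_1|, |n_2|)$ and $n_{\min} := \min(|n_1|, |n_2|)$. -/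
open Real

lemma jb_abs (m : ℤ) : jb |m| = jb m := by
  simp only [jb, Int.cast_abs, sq_abs]

lemma jb_le_jb_of_abs_le {m m' : ℤ} (h : |m| ≤ |m'|) : jb m ≤ jb m' := by
  have h' : |(m : ℝ)| ≤ |(m' : ℝ)| := by exact_mod_cast h
  exact sqrt_le_sqrt (by nlinarith [sq_le_sq.2 h'])

lemma jb_min_le_jb_max (n₁ n₂ : ℤ) : jb (min |n₁| |n₂|) ≤ jb (max |n₁| |n₂|) := by
  rcases le_total |n₁| |n₂| with h | h
  · rw [min_eq_left h, max_eq_right h, jb_abs, jb_abs]; exact jb_le_jb_of_abs_le h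
  · rw [min_eq_right h, max_eq_left h, jb_abs, jb_abs]; exact jb_le_jb_of_abs_le h

lemma jb_max_mul_jb_min (n₁ n₂ : ℤ) :
    jb (max |n₁| |n₂|) * jb (min |n₁| |n₂|) = jb n₁ * jb n₂ := by
  rcases le_total |n₁| |n₂| with h | h
  · rw [min_eq_left h, max_eq_right h, jb_abs, jb_abs, mul_comm]
  · rw [min_eq_right h, max_eq_left h, jb_abs, jb_abs]

lemma jb_add_le (n₁ n₂ : ℤ) : jb (n₁ + n₂) ≤ 2 * jb (max |n₁| |n₂|) := by
  have h₁ : |(n₁ : ℝ)| ≤ ((max |n₁| |n₂| : ℤ) : ℝ) := by exact_mod_cast le_max_left _ _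
  have h₂ : |(n₂ : ℝ)| ≤ ((max |n₁| |n₂| : ℤ) : ℝ) := by exact_mod_cast le_max_right _ _
  have hsum : |(n₁ : ℝ) + n₂| ≤ 2 * ((max |n₁| |n₂| : ℤ) : ℝ) :=
    (abs_add_le _ _).trans (by linarith)
  rw [jb, sqrt_le_iff, mul_pow, jb, sq_sqrt (by positivity), Int.cast_add]
  refine ⟨by positivity, ?_⟩
  nlinarith [sq_abs ((n₁ : ℝ) + n₂), pow_le_pow_left₀ (abs_nonneg _) hsum 2]

lemma rpow_sub_one_mul_le_rpow {N x : ℝ} (s : ℝ) (hN : 0 < N) (hx : x ≤ N) :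
    N ^ (s - 1) * x ≤ N ^ s :=
  calc N ^ (s - 1) * x ≤ N ^ (s - 1) * N := by gcongr
    _ = N ^ s := by rw [← rpow_add_one hN.ne', sub_add_cancel]

lemma symbol_le_two_rpow_mul {a b N x s : ℝ} (hb : 0 < b) (hba : b ≤ a) (hN : 0 < N)
    (hx : x ≤ N) (hNa : N ≤ 2 * a) (hs : 1 / 2 ≤ s) :
    N ^ (s - 1) * x * (a * b) ^ s / (a ^ ((5 : ℝ) / 3) * b)
      ≤ 2 ^ s * a ^ (3 * s - 13 / 6) * b ^ (-(1 : ℝ) / 2) := by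
  have ha : 0 < a := hb.trans_le hba
  have hNs : N ^ (s - 1) * x ≤ 2 ^ s * a ^ s := by
    rw [← mul_rpow zero_le_two ha.le]
    exact (rpow_sub_one_mul_le_rpow s hN hx).trans (rpow_le_rpow hN.le hNa (by linarith))
  have hratio : b ^ (s - 1 / 2) ≤ a ^ (s - 1 / 2) := rpow_le_rpow hb.le hba (by linarith)
  rw [div_le_iff₀ (by positivity)]
  calc N ^ (s - 1) * x * (a * b) ^ s
      ≤ 2 ^ s * a ^ s * (a * b) ^ s := by gcongr
    _ = 2 ^ s * (a ^ s * a ^ s) * (b ^ ((1 : ℝ) / 2) * b ^ (s - 1 / 2)) := by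
      rw [← rpow_add hb, mul_rpow ha.le hb.le]; ring_nf
    _ ≤ 2 ^ s * (a ^ s * a ^ s) * (b ^ ((1 : ℝ) / 2) * a ^ (s - 1 / 2)) := by gcongr
    _ = 2 ^ s * a ^ (3 * s - 13 / 6) * b ^ (-(1 : ℝ) / 2) * (a ^ ((5 : ℝ) / 3) * b) := by
      have ha_exp :
          a ^ s * a ^ s * a ^ (s - 1 / 2) = a ^ (3 * s - 13 / 6) * a ^ ((5 : ℝ) / 3) := by
        simp only [← rpow_add ha]; ring_nf
      have hb_exp : b ^ ((1 : ℝ) / 2) = b ^ (-(1 : ℝ) / 2) * b := by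
        rw [← rpow_add_one hb.ne']; norm_num
      rw [hb_exp]
      linear_combination (2 ^ s * b ^ (-(1 : ℝ) / 2) * b) * ha_exp

theorem stmt_13 :
    ∀ s : ℝ, 1/2 ≤ s → s < 13/18 →
      ∃ C : ℝ, 0 < C ∧ ∀ n₁ n₂ : ℤ, n₁ ≠ 0 → n₂ ≠ 0 → n₁ + n₂ ≠ 0 →
        jb (n₁ + n₂) ^ (s - 1) * |((n₁ + n₂ : ℤ) : ℝ)| * jb n₁ ^ s * jb n₂ ^ s
            / (jb (max |n₁| |n₂|) ^ ((5:ℝ)/3) * jb (min |n₁| |n₂|))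
          ≤ C * jb (max |n₁| |n₂|) ^ (3*s - 13/6) * jb (min |n₁| |n₂|) ^ (-(1:ℝ)/2) := by
  intro s hs _
  refine ⟨2 ^ s, by positivity, fun n₁ n₂ _ _ _ => ?_⟩
  rw [mul_assoc _ (jb n₁ ^ s), ← mul_rpow (jb_pos n₁).le (jb_pos n₂).le,
    ← jb_max_mul_jb_min]
  exact symbol_le_two_rpow_mul (jb_pos _) (jb_min_le_jb_max n₁ n₂) (jb_pos _) (abs_le_jb _)
    (jb_add_le n₁ n₂) hs
end

section
/- For every $s$ with $\tfrac{1}{2} \leq s \leq \tfrac{2}{3}$ there exists a constant $C > 0$ such that the following holds. Let $n_1, n_2, n_3$ be nonzero integers with $n_1 + n_2 \neq 0$, $n_2 + n_3 \neq 0$, $n_3 + n_1 \neq 0$, satisfying $\max(|n_1|, |n_2|, |n_3|) \leq 4 \min(|n_1|, |n_2|, |n_3|)$, and set $n := n_1 + n_2 + n_3$ and $H_3 := (n_1 + n_2)(n_2 + n_3)(n_3 + n_1)$. Assume moreover $|n| \geq \tfrac{1}{4}|n_1|$ and $|n_1 + n_2| \geq \tfrac{1}{4}|n|$. Then $\langle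 n_1\rangle^{s}\, \langle n_2\rangle^{s} \;\leq\; C\, \langle n\rangle^{s}\, \langle n_3\rangle^{1-s}\, \langle H_3\rangle^{1/3}$. -/
lemma one_le_jb (m : ℤ) : 1 ≤ jb m :=
  Real.one_le_sqrt.2 (le_add_of_nonneg_right (sq_nonneg _))

lemma jb_le_mul_jb_of_abs_le {m m' : ℤ} {k : ℝ} (hk : 1 ≤ k)
    (h : |(m : ℝ)| ≤ k * |(m' : ℝ)|) : jb m ≤ k * jb m' := by
  have hsq : (m : ℝ) ^ 2 ≤ k ^ 2 * (m' : ℝ) ^ 2 := by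
    simpa only [sq_abs, mul_pow] using pow_le_pow_left₀ (abs_nonneg _) h 2
  have hk2 : 1 ≤ k ^ 2 := one_le_pow₀ hk
  calc jb m ≤ Real.sqrt (k ^ 2 * (1 + (m' : ℝ) ^ 2)) := Real.sqrt_le_sqrt (by nlinarith)
    _ = k * jb m' := by rw [Real.sqrt_mul (sq_nonneg k), Real.sqrt_sq (by linarith), jb]

lemma rpow_mul_rpow_le_of_le_mul {x y s : ℝ} (hx : 1 ≤ x) (hy₀ : 0 ≤ y) (hy : y ≤ 4 * x)
    (hs₀ : 0 ≤ s) (hs : s ≤ 2 / 3) : x ^ s * y ^ s ≤ 4 * x ^ ((4 : ℝ) / 3) := by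
  have hx₀ : 0 ≤ x := by linarith
  calc x ^ s * y ^ s = (x * y) ^ s := (Real.mul_rpow hx₀ hy₀).symm
    _ ≤ (4 * x ^ (2 : ℝ)) ^ s := by
        refine Real.rpow_le_rpow (by positivity) ?_ hs₀
        rw [Real.rpow_two, sq, mul_left_comm]
        exact mul_le_mul_of_nonneg_left hy hx₀
    _ = 4 ^ s * x ^ (2 * s) := by
        rw [Real.mul_rpow (by norm_num) (by positivity), ← Real.rpow_mul hx₀]
    _ ≤ 4 * x ^ ((4 : ℝ) / 3) :=
        mul_le_mul (Real.rpow_le_self_of_one_le (by norm_num) (by linarith))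
          (Real.rpow_le_rpow_of_exponent_le hx (by linarith)) (by positivity) (by norm_num)

lemma rpow_le_mul_rpow_mul_rpow_mul_rpow {x u v w s : ℝ} (hx : 0 < x) (hu : x ≤ 4 * u)
    (hv : x ≤ 4 * v) (hw : x ≤ 16 * w) (hs₀ : 0 ≤ s) (hs : s ≤ 1) :
    x ^ ((4 : ℝ) / 3) ≤ 64 * (u ^ s * v ^ (1 - s) * w ^ ((1 : ℝ) / 3)) := by
  have hu₀ : 0 ≤ u := by linarith
  have hv₀ : 0 ≤ v := by linarith
  have hw₀ : 0 ≤ w := by linarith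
  have h4 : (4 : ℝ) ^ s * 4 ^ (1 - s) = 4 := by
    rw [← Real.rpow_add (by norm_num)]; norm_num
  have h16 : (16 : ℝ) ^ ((1 : ℝ) / 3) ≤ 16 :=
    Real.rpow_le_self_of_one_le (by norm_num) (by norm_num)
  calc x ^ ((4 : ℝ) / 3) = x ^ s * x ^ (1 - s) * x ^ ((1 : ℝ) / 3) := by
        rw [← Real.rpow_add hx, ← Real.rpow_add hx]; norm_num
    _ ≤ (4 * u) ^ s * (4 * v) ^ (1 - s) * (16 * w) ^ ((1 : ℝ) / 3) := by
        gcongr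
    _ = 4 * 16 ^ ((1 : ℝ) / 3) * (u ^ s * v ^ (1 - s) * w ^ ((1 : ℝ) / 3)) := by
        rw [Real.mul_rpow (by norm_num) hu₀, Real.mul_rpow (by norm_num) hv₀,
          Real.mul_rpow (by norm_num) hw₀]
        linear_combination (16 ^ ((1 : ℝ) / 3) * (u ^ s * v ^ (1 - s) * w ^ ((1 : ℝ) / 3))) * h4
    _ ≤ 64 * (u ^ s * v ^ (1 - s) * w ^ ((1 : ℝ) / 3)) := by
        gcongr; linarith

theorem stmt_16 :
    ∀ s : ℝ, 1/2 ≤ s → s ≤ 2/3 →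
      ∃ C : ℝ, 0 < C ∧ ∀ n₁ n₂ n₃ : ℤ, n₁ ≠ 0 → n₂ ≠ 0 → n₃ ≠ 0 →
        n₁ + n₂ ≠ 0 → n₂ + n₃ ≠ 0 → n₃ + n₁ ≠ 0 →
        max |n₁| (max |n₂| |n₃|) ≤ 4 * min |n₁| (min |n₂| |n₃|) →
        4 * |n₁ + n₂ + n₃| ≥ |n₁| →
        4 * |n₁ + n₂| ≥ |n₁ + n₂ + n₃| →
        jb n₁ ^ s * jb n₂ ^ s
          ≤ C * jb (n₁ + n₂ + n₃) ^ s * jb n₃ ^ (1 - s)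
              * jb ((n₁ + n₂) * (n₂ + n₃) * (n₃ + n₁)) ^ ((1:ℝ)/3) := by
  intro s hs₁ hs₂
  refine ⟨256, by norm_num, fun n₁ n₂ n₃ _ _ _ h₁₂ h₂₃ h₃₁ hmax hn hn₁₂ => ?_⟩
  set H := (n₁ + n₂) * (n₂ + n₃) * (n₃ + n₁)
  have hH : |n₁ + n₂| ≤ |H| :=
    Int.le_abs_of_dvd (mul_ne_zero (mul_ne_zero h₁₂ h₂₃) h₃₁)
      ((abs_dvd _ _).2 (dvd_mul_of_dvd_left (dvd_mul_right _ _) _))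
  have h₂ : jb n₂ ≤ 4 * jb n₁ :=
    jb_le_mul_jb_of_abs_le (by norm_num) (by exact_mod_cast (by omega : |n₂| ≤ 4 * |n₁|))
  have hn' : jb n₁ ≤ 4 * jb (n₁ + n₂ + n₃) :=
    jb_le_mul_jb_of_abs_le (by norm_num) (by exact_mod_cast hn)
  have h₃ : jb n₁ ≤ 4 * jb n₃ :=
    jb_le_mul_jb_of_abs_le (by norm_num) (by exact_mod_cast (by omega : |n₁| ≤ 4 * |n₃|))
  have hH' : jb n₁ ≤ 16 * jb H :=
    jb_le_mul_jb_of_abs_le (by norm_num) (by exact_mod_cast (by omega : |n₁| ≤ 16 * |H|))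
  calc jb n₁ ^ s * jb n₂ ^ s ≤ 4 * jb n₁ ^ ((4 : ℝ) / 3) :=
        rpow_mul_rpow_le_of_le_mul (one_le_jb n₁) (zero_le_one.trans (one_le_jb n₂)) h₂
          (by linarith) hs₂
    _ ≤ 4 * (64 * (jb (n₁ + n₂ + n₃) ^ s * jb n₃ ^ (1 - s) * jb H ^ ((1:ℝ)/3))) := by
        gcongr
        exact rpow_le_mul_rpow_mul_rpow_mul_rpow (zero_lt_one.trans_le (one_le_jb n₁)) hn' h₃
          hH' (by linarith) (by linarith)
    _ = 256 * jb (n₁ + n₂ + n₃) ^ s * jb n₃ ^ (1 - s) * jb H ^ ((1:ℝ)/3) := by ring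
end
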